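/- If for each edge the series admittance matrix g_e is positive definite Hermitian (as a real-part condition on the complex admittance) and shunts are zero, then the flattened nodal admittance matrix Y is positive semidefinite Hermitian, with Y V = 0 for the flattened all-constant-per-phase voltage profiles. -/

import Mathlib

/-!
Each edge `e = (k, m)` contributes the congruence `D_eᴴ g_e D_e` to `Y`, where `D_e` sends a
flattened voltage profile to its per-phase drop `v_k - v_m` across the edge. Congruence and sums
preserve positive semidefiniteness, and the quadratic form of `D_eᴴ g_e D_e` at `V` is the
`g_e`-form of the drop.
-/

open Matrix ComplexOrder

/-- Shunt-free nodal admittance hypermatrix built from edge admittance blocks. -/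
noncomputable def shuntFreeTensor {Node E : Type*} [DecidableEq Node] [Fintype E]
    (ends : E → Node × Node) (g : E → Matrix (Fin 3) (Fin 3) ℂ) :
    Fin 3 → Fin 3 → Node → Node → ℂ :=
  fun i j k m =>
    ∑ e : E,
      ((if k = (ends e).1 ∧ m = (ends e).1 then g e else 0) +
       (if k = (ends e).2 ∧ m = (ends e).2 then g e else 0) -
       (if k = (ends e).1 ∧ m = (ends e).2 then g e else 0) -
       (if k = (ends e).2 ∧ m = (ends e).1 then g e else 0)) i j

open Kronecker

section EdgeDifference

variable {ι Node : Type*} [DecidableEq ι] [DecidableEq Node]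

def edgeIncidence (edge : Node × Node) (k : Node) : ℂ :=
  (if k = edge.1 then 1 else 0) - (if k = edge.2 then 1 else 0)

@[simp]
lemma conj_edgeIncidence (edge : Node × Node) (k : Node) :
    starRingEnd ℂ (edgeIncidence edge k) = edgeIncidence edge k := by
  unfold edgeIncidence
  split_ifs <;> simp

variable (ι) in
def edgeDifference (edge : Node × Node) : Matrix ι (ι × Node) ℂ :=
  fun i p => if i = p.1 then edgeIncidence edge p.2 else 0

lemma edgeDifference_mulVec [Fintype ι] [Fintype Node] (edge : Node × Node)
    (V : ι × Node → ℂ) (i : ι) :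
    (edgeDifference ι edge *ᵥ V) i = V (i, edge.1) - V (i, edge.2) := by
  simp [edgeDifference, edgeIncidence, mulVec, dotProduct, Fintype.sum_prod_type, ite_mul,
    sub_mul]

lemma conjTranspose_edgeDifference_mul_mul [Fintype ι] (edge : Node × Node)
    (A : Matrix ι ι ℂ) :
    (edgeDifference ι edge)ᴴ * A * edgeDifference ι edge =
      A ⊗ₖ vecMulVec (edgeIncidence edge) (edgeIncidence edge) := by
  ext ⟨i, k⟩ ⟨j, m⟩
  simp [edgeDifference, mul_apply, vecMulVec_apply, apply_ite (starRingEnd ℂ), ite_mul]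
  ring

end EdgeDifference

lemma star_dotProduct_conjTranspose_mul_mul_mulVec {R m n : Type*} [CommRing R] [StarRing R]
    [Fintype m] [Fintype n] (A : Matrix n n R) (B : Matrix n m R) (x : m → R) :
    star x ⬝ᵥ (Bᴴ * A * B) *ᵥ x = star (B *ᵥ x) ⬝ᵥ A *ᵥ (B *ᵥ x) := by
  simp only [star_mulVec, dotProduct_mulVec, vecMul_vecMul, ← mulVec_mulVec]

lemma star_dotProduct_mulVec_eq_sum {R n : Type*} [CommSemiring R] [StarRing R] [Fintype n]
    (A : Matrix n n R) (w : n → R) :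
    star w ⬝ᵥ A *ᵥ w = ∑ i, ∑ j, starRingEnd R (w i) * A i j * w j := by
  simp [dotProduct, mulVec, Finset.mul_sum, mul_assoc, starRingEnd_apply]

lemma shuntFreeTensor_eq_sum {Node E : Type*} [DecidableEq Node] [Fintype E]
    (ends : E → Node × Node) (g : E → Matrix (Fin 3) (Fin 3) ℂ) (i j : Fin 3) (k m : Node) :
    shuntFreeTensor ends g i j k m =
      ∑ e, edgeIncidence (ends e) k * edgeIncidence (ends e) m * g e i j := by
  unfold shuntFreeTensor edgeIncidence
  refine Finset.sum_congr rfl fun e _ => ?_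
  split_ifs <;> simp_all

lemma eq_sum_conjTranspose_edgeDifference_mul_mul {Node E : Type*} [DecidableEq Node]
    [Fintype E] (ends : E → Node × Node) (g : E → Matrix (Fin 3) (Fin 3) ℂ)
    (Y : Matrix (Fin 3 × Node) (Fin 3 × Node) ℂ)
    (hY : ∀ i j k m, Y (i, k) (j, m) = shuntFreeTensor ends g i j k m) :
    Y = ∑ e, (edgeDifference (Fin 3) (ends e))ᴴ * g e * edgeDifference (Fin 3) (ends e) := by
  ext ⟨i, k⟩ ⟨j, m⟩
  simp only [hY, shuntFreeTensor_eq_sum, conjTranspose_edgeDifference_mul_mul,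
    Matrix.sum_apply, kroneckerMap_apply, vecMulVec_apply]
  exact Finset.sum_congr rfl fun e _ => by ring

theorem shuntFree_flattened_posSemidef_general {N : ℕ} {E : Type*} [Fintype E]
    (ends : E → Fin N × Fin N) (g : E → Matrix (Fin 3) (Fin 3) ℂ)
    (hg : ∀ e, (g e).PosSemidef)
    (Y : Matrix (Fin 3 × Fin N) (Fin 3 × Fin N) ℂ)
    (hY : ∀ i j k m, Y (i, k) (j, m) = shuntFreeTensor ends g i j k m) :
    Y.PosSemidef ∧
    ∀ v : Fin N → Fin 3 → ℂ, ∀ V : Fin 3 × Fin N → ℂ, (∀ j m, V (j, m) = v m j) →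
      (star V ⬝ᵥ Y.mulVec V =
        ∑ e : E, ∑ i : Fin 3, ∑ j : Fin 3,
          starRingEnd ℂ (v (ends e).1 i - v (ends e).2 i) * g e i j *
            (v (ends e).1 j - v (ends e).2 j)) ∧
      0 ≤ (star V ⬝ᵥ Y.mulVec V).re := by
  rw [eq_sum_conjTranspose_edgeDifference_mul_mul ends g Y hY]
  have hpsd := posSemidef_sum Finset.univ fun e _ =>
    (hg e).conjTranspose_mul_mul_same (edgeDifference (Fin 3) (ends e))
  refine ⟨hpsd, fun v V hV => ⟨?_, (Complex.nonneg_iff.mp (hpsd.dotProduct_mulVec_nonneg V)).1⟩⟩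
  rw [sum_mulVec, dotProduct_sum]
  refine Finset.sum_congr rfl fun e _ => ?_
  rw [star_dotProduct_conjTranspose_mul_mul_mulVec, star_dotProduct_mulVec_eq_sum]
  simp only [edgeDifference_mulVec, hV]

/-- If every series admittance block `g e` is a positive semidefinite Hermitian
matrix and there are no shunts, then the flattened `3N × 3N` nodal admittance
matrix `Y (i, k) (j, m) = y i j k m` is Hermitian positive semidefinite, and its
quadratic form decomposes over edges as
`⟪V, Y V⟫ = ∑ e, (v k₀ - v m₀)ᴴ g_e (v k₀ - v m₀) ≥ 0`. -/
theorem shuntFree_flattened_posSemidef {N : ℕ} {E : Type*} [Fintype E]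
    (ends : E → Fin N × Fin N) (g : E → Matrix (Fin 3) (Fin 3) ℂ)
    (hdist : ∀ e, (ends e).1 ≠ (ends e).2) (hg : ∀ e, (g e).PosSemidef)
    (Y : Matrix (Fin 3 × Fin N) (Fin 3 × Fin N) ℂ)
    (hY : ∀ i j k m, Y (i, k) (j, m) = shuntFreeTensor ends g i j k m) :
    Y.PosSemidef ∧
    ∀ v : Fin N → Fin 3 → ℂ, ∀ V : Fin 3 × Fin N → ℂ, (∀ j m, V (j, m) = v m j) →
      (star V ⬝ᵥ Y.mulVec V =
        ∑ e : E, ∑ i : Fin 3, ∑ j : Fin 3,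
          starRingEnd ℂ (v (ends e).1 i - v (ends e).2 i) * g e i j *
            (v (ends e).1 j - v (ends e).2 j)) ∧
      0 ≤ (star V ⬝ᵥ Y.mulVec V).re :=
  shuntFree_flattened_posSemidef_general ends g hg Y hY
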